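/- q(K_4 □ K_4) = 5/7, where K_4 □ K_4 is the cartesian product of the complete graph on 4 vertices with itself. -/

import Mathlib

open SimpleGraph Set
open scoped Classical

/-- The degree ratio of a vertex `v` with respect to the partition `(s, sᶜ)`:
the size of its closed neighborhood inside its own side divided by the size of
its closed neighborhood in `G`. -/
noncomputable def vertexRatio {V : Type*} (G : SimpleGraph V) (s : Set V) (v : V) : ℝ :=
  (((G.neighborSet v ∩ (if v ∈ s then s else sᶜ)).ncard : ℝ) + 1) /
    (((G.neighborSet v).ncard : ℝ) + 1)

/-- The worst (minimum) degree ratio over all vertices, for the partition `(s, sᶜ)`. -/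
noncomputable def minRatio {V : Type*} (G : SimpleGraph V) (s : Set V) : ℝ :=
  sInf (Set.range (vertexRatio G s))

/-- The optimal degree ratio `q(G)`: the maximum over all nontrivial partitions
of the worst degree ratio. -/
noncomputable def degreeRatio {V : Type*} (G : SimpleGraph V) : ℝ :=
  sSup { r : ℝ | ∃ s : Set V, s.Nonempty ∧ sᶜ.Nonempty ∧ r = minRatio G s }

/-!
Write the ratio of `v` as `(d(v) - c(v) + 1) / (d(v) + 1)`, where `c(v)` counts the neighbours
of `v` on the other side of the partition. Every vertex of `K₄ □ K₄` has degree `6`. Splitting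
the rows into two pairs gives `c ≡ 2`, hence ratio `5/7` at every vertex. Conversely, the
connected graph `K₄ □ K₄` has an edge crossing any nontrivial partition; it lies in a row or a
column, a copy of `K₄`, and as `K₄` has no matching cut some vertex of that line has two
neighbours across, so its ratio is at most `5/7`.
-/

namespace SimpleGraph

variable {V W : Type*}

def crossNeighborSet (G : SimpleGraph V) (s : Set V) (v : V) : Set V :=
  G.neighborSet v \ (if v ∈ s then s else sᶜ)

section CrossNeighbors

variable {G : SimpleGraph V} {s : Set V} {v w : V}

lemma mem_crossNeighborSet : w ∈ G.crossNeighborSet s v ↔ G.Adj v w ∧ (w ∈ s ↔ v ∉ s) := by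
  unfold crossNeighborSet
  split_ifs with hv <;> simp [hv]

lemma vertexRatio_eq [G.LocallyFinite] (s : Set V) (v : V) :
    vertexRatio G s v = (((G.neighborSet v).ncard : ℝ) - (G.crossNeighborSet s v).ncard + 1) /
      ((G.neighborSet v).ncard + 1) := by
  rw [vertexRatio, crossNeighborSet,
    ← ncard_inter_add_ncard_sdiff_eq_ncard (G.neighborSet v) (if v ∈ s then s else sᶜ)]
  push_cast
  ring

lemma vertexRatio_le_of_nontrivial [G.LocallyFinite] (h : (G.crossNeighborSet s v).Nontrivial) :
    vertexRatio G s v ≤ (((G.neighborSet v).ncard : ℝ) - 1) / ((G.neighborSet v).ncard + 1) := by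
  have : Finite (G.crossNeighborSet s v) := (G.neighborSet v).toFinite.subset sdiff_subset
  have h₂ : (2 : ℝ) ≤ (G.crossNeighborSet s v).ncard := by
    exact_mod_cast (one_lt_ncard_iff_nontrivial.mpr h)
  rw [vertexRatio_eq]
  gcongr
  linarith

lemma minRatio_le_vertexRatio (s : Set V) (v : V) :
    minRatio G s ≤ vertexRatio G s v :=
  csInf_le ⟨0, by rintro _ ⟨w, rfl⟩; unfold vertexRatio; positivity⟩ ⟨v, rfl⟩

lemma minRatio_eq_of_forall_vertexRatio_eq [Nonempty V] {r : ℝ}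
    (h : ∀ v, vertexRatio G s v = r) : minRatio G s = r := by
  rw [minRatio, funext h, range_const, csInf_singleton]

lemma degreeRatio_eq_of_forall_minRatio_le {r : ℝ} {s₀ : Set V} (hs₀ : s₀.Nonempty)
    (hs₀' : s₀ᶜ.Nonempty) (h₀ : minRatio G s₀ = r)
    (h : ∀ s : Set V, s.Nonempty → sᶜ.Nonempty → minRatio G s ≤ r) : degreeRatio G = r :=
  IsGreatest.csSup_eq ⟨⟨s₀, hs₀, hs₀', h₀.symm⟩, by rintro _ ⟨s, hs, hs', rfl⟩; exact h s hs hs'⟩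

end CrossNeighbors

lemma Embedding.nontrivial_crossNeighborSet {G : SimpleGraph V} {H : SimpleGraph W}
    (f : H ↪g G) {s : Set V} {w : W} (h : (H.crossNeighborSet (f ⁻¹' s) w).Nontrivial) :
    (G.crossNeighborSet s (f w)).Nontrivial := by
  refine (h.image f.injective).mono ?_
  rintro _ ⟨u, hu, rfl⟩
  rw [mem_crossNeighborSet] at hu ⊢
  exact ⟨f.map_adj_iff.mpr hu.1, hu.2⟩

lemma ncard_neighborSet_top [Finite V] (v : V) :
    ((⊤ : SimpleGraph V).neighborSet v).ncard = Nat.card V - 1 := by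
  rw [neighborSet_top, ncard_compl, ncard_singleton]

lemma crossNeighborSet_top (s : Set V) (v : V) :
    (⊤ : SimpleGraph V).crossNeighborSet s v = if v ∈ s then sᶜ else s := by
  ext w
  by_cases hv : v ∈ s <;> by_cases hw : w ∈ s <;>
    simp [mem_crossNeighborSet, hv, hw] <;> rintro rfl <;> contradiction

-- `K_n` has no matching cut for `n ≥ 3`.
lemma exists_nontrivial_crossNeighborSet_top (hV : 3 ≤ ENat.card V) {s : Set V}
    {x y : V} (hx : x ∈ s) (hy : y ∉ s) :
    ∃ v, ((⊤ : SimpleGraph V).crossNeighborSet s v).Nontrivial := by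
  obtain ⟨z, hzx, hzy⟩ := ENat.exists_ne_ne_of_three_le hV x y
  have hxy : x ≠ y := ne_of_mem_of_not_mem hx hy
  by_cases hz : z ∈ s
  · exact ⟨y, x, by simp [mem_crossNeighborSet, hxy.symm, hx, hy],
      z, by simp [mem_crossNeighborSet, hzy.symm, hz, hy], hzx.symm⟩
  · exact ⟨x, y, by simp [mem_crossNeighborSet, hxy, hx, hy],
      z, by simp [mem_crossNeighborSet, hzx.symm, hz, hx], hzy.symm⟩

section BoxProd

variable {G : SimpleGraph V} {H : SimpleGraph W}

lemma ncard_neighborSet_boxProd [G.LocallyFinite] [H.LocallyFinite] (x : V × W) :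
    ((G □ H).neighborSet x).ncard = (G.neighborSet x.1).ncard + (H.neighborSet x.2).ncard := by
  rw [neighborSet_boxProd, ncard_union_eq, ncard_prod, ncard_prod, ncard_singleton,
    ncard_singleton, mul_one, one_mul]
  exact disjoint_prod.mpr (Or.inl (by simp))

lemma crossNeighborSet_boxProd_preimage_fst (t : Set V) (x : V × W) :
    (G □ H).crossNeighborSet (Prod.fst ⁻¹' t) x = G.crossNeighborSet t x.1 ×ˢ {x.2} := by
  ext ⟨a, b⟩
  simp only [mem_crossNeighborSet, boxProd_adj, mem_preimage, mem_prod, mem_singleton_iff]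
  constructor
  · rintro ⟨⟨hG, rfl⟩ | ⟨-, rfl⟩, hab⟩
    · exact ⟨⟨hG, hab⟩, rfl⟩
    · exact (iff_not_self hab).elim
  · rintro ⟨⟨hG, hab⟩, rfl⟩
    exact ⟨Or.inl ⟨hG, rfl⟩, hab⟩

lemma exists_nontrivial_crossNeighborSet_boxProd_top (hV : 3 ≤ ENat.card V)
    (hW : 3 ≤ ENat.card W) {s : Set (V × W)} {x y : V × W} (hx : x ∈ s) (hy : y ∉ s) :
    ∃ v, (((⊤ : SimpleGraph V) □ (⊤ : SimpleGraph W)).crossNeighborSet s v).Nontrivial := by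
  have : Nonempty V := ⟨x.1⟩
  have : Nonempty W := ⟨x.2⟩
  obtain ⟨p⟩ := (connected_top.boxProd connected_top).preconnected x y
  obtain ⟨⟨⟨u, w⟩, huw⟩, -, hu, hw⟩ := p.exists_boundary_dart s hx hy
  rcases boxProd_adj.mp huw with ⟨-, h₂⟩ | ⟨-, h₁⟩
  · let f := boxProdLeft (⊤ : SimpleGraph V) (⊤ : SimpleGraph W) u.2
    obtain ⟨v, hv⟩ := exists_nontrivial_crossNeighborSet_top hV (s := f ⁻¹' s) (x := u.1)
      (y := w.1) hu (show (w.1, u.2) ∉ s by rwa [h₂])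
    exact ⟨f v, f.nontrivial_crossNeighborSet hv⟩
  · let f := boxProdRight (⊤ : SimpleGraph V) (⊤ : SimpleGraph W) u.1
    obtain ⟨v, hv⟩ := exists_nontrivial_crossNeighborSet_top hW (s := f ⁻¹' s) (x := u.2)
      (y := w.2) hu (show (u.1, w.2) ∉ s by rwa [h₁])
    exact ⟨f v, f.nontrivial_crossNeighborSet hv⟩

end BoxProd

end SimpleGraph

open SimpleGraph

theorem stmt_19 :
    degreeRatio ((⊤ : SimpleGraph (Fin 4)) □ (⊤ : SimpleGraph (Fin 4))) = 5 / 7 := by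
  have hcard : 3 ≤ ENat.card (Fin 4) := by
    rw [ENat.card_eq_coe_fintype_card, Fintype.card_fin]; norm_num
  have hdeg (x : Fin 4 × Fin 4) : (((⊤ : SimpleGraph (Fin 4)) □ ⊤).neighborSet x).ncard = 6 := by
    rw [ncard_neighborSet_boxProd, ncard_neighborSet_top, ncard_neighborSet_top, Nat.card_fin]
  have hcross (a : Fin 4) : ((⊤ : SimpleGraph (Fin 4)).crossNeighborSet {0, 1} a).ncard = 2 := by
    have hpair : ({0, 1} : Set (Fin 4)).ncard = 2 := ncard_pair (by decide)
    rw [crossNeighborSet_top]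
    split_ifs
    · rw [ncard_compl, hpair, Nat.card_fin]
    · exact hpair
  refine degreeRatio_eq_of_forall_minRatio_le (s₀ := Prod.fst ⁻¹' {0, 1})
    ⟨(0, 0), by simp⟩ ⟨(2, 0), by simp⟩ ?_ ?_
  · refine minRatio_eq_of_forall_vertexRatio_eq fun x => ?_
    rw [vertexRatio_eq, hdeg, crossNeighborSet_boxProd_preimage_fst, ncard_prod, ncard_singleton,
      hcross]
    norm_num
  · rintro s ⟨x, hx⟩ ⟨y, hy⟩
    obtain ⟨v, hv⟩ := exists_nontrivial_crossNeighborSet_boxProd_top hcard hcard hx hy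
    calc minRatio _ s ≤ vertexRatio _ s v := minRatio_le_vertexRatio s v
      _ ≤ ((6 : ℕ) - 1) / ((6 : ℕ) + 1) := hdeg v ▸ vertexRatio_le_of_nontrivial hv
      _ = 5 / 7 := by norm_num
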